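/- arXiv:math/0504605 — 4 statements merged into one kernel-verified Lean document; each statement's English description precedes it below -/
import Mathlib

section
/- Let G = ⟨a1,...,a_{2g}, f | [a1,f], ..., [a_{2g},f], [a1,a2]···[a_{2g−1},a_{2g}]·f^e⟩ with g ≥ 1 and e = ±1. For any integers z1,...,z_{2g}, any index i, and any η ∈ {−1,1}, the tuple (a1 f^{z1},...,a_{2g} f^{z_{2g}}) is Nielsen equivalent to the tuple obtained by replacing a_i f^{z_i} with a_i f^{z_i+η} and leaving all other entries unchanged. -/
/-- An elementary Nielsen move on `n`-tuples of elements of a group `G`: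
permute the entries, invert one entry, or replace an entry `gᵢ` by
`gᵢ * gⱼ^ε` for some `j ≠ i` and `ε = ±1`. -/
inductive NielsenMove (G : Type*) [Group G] (n : ℕ) : (Fin n → G) → (Fin n → G) → Prop
  | perm (T : Fin n → G) (σ : Equiv.Perm (Fin n)) : NielsenMove G n T (T ∘ σ)
  | inv (T : Fin n → G) (i : Fin n) : NielsenMove G n T (Function.update T i (T i)⁻¹)
  | mul (T : Fin n → G) (i j : Fin n) (hij : i ≠ j) (ε : ℤ) (hε : ε = 1 ∨ ε = -1) :
      NielsenMove G n T (Function.update T i (T i * T j ^ ε))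

/-- Nielsen equivalence: the equivalence relation generated by elementary Nielsen moves. -/
def NielsenEq (G : Type*) [Group G] (n : ℕ) : (Fin n → G) → (Fin n → G) → Prop :=
  Relation.EqvGen (NielsenMove G n)

open scoped commutatorElement in
/-- The product of commutators `[a₁,a₂]⋯[a_{2g-1},a_{2g}]` (taken in order). -/
def surfaceRel {G : Type*} [Group G] (g : ℕ) (a : Fin (2 * g) → G) : G :=
  ((List.finRange g).map (fun i =>
    ⁅a ⟨2 * i.val, by have := i.isLt; omega⟩, a ⟨2 * i.val + 1, by have := i.isLt; omega⟩⁆)).prod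

section Aux

variable {G : Type*} [Group G] {n : ℕ}

open Function

lemma ne_of_move {T T' : Fin n → G} (h : NielsenMove G n T T') : NielsenEq G n T T' :=
  Relation.EqvGen.rel _ _ h

lemma ne_refl (T : Fin n → G) : NielsenEq G n T T := Relation.EqvGen.refl T

lemma ne_symm {T T' : Fin n → G} (h : NielsenEq G n T T') : NielsenEq G n T' T :=
  Relation.EqvGen.symm _ _ h

lemma ne_trans {T T' T'' : Fin n → G} (h : NielsenEq G n T T') (h' : NielsenEq G n T' T'') :
    NielsenEq G n T T'' := Relation.EqvGen.trans _ _ _ h h'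

/-- the subgroup generated by the entries other than `i` -/
def otherSub (T : Fin n → G) (i : Fin n) : Subgroup G :=
  Subgroup.closure {x | ∃ j, j ≠ i ∧ T j = x}

lemma mem_otherSub {T : Fin n → G} {i j : Fin n} (h : j ≠ i) : T j ∈ otherSub T i :=
  Subgroup.subset_closure ⟨j, h, rfl⟩

lemma commute_otherSub {T : Fin n → G} {i : Fin n} {F : G} (hc : ∀ j, Commute (T j) F)
    {w : G} (hw : w ∈ otherSub T i) : Commute w F := by
  induction hw using Subgroup.closure_induction with
  | mem x hx => obtain ⟨j, _, rfl⟩ := hx; exact hc j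
  | one => exact Commute.one_left F
  | mul x y hx hy ihx ihy => exact ihx.mul_left ihy
  | inv x hx ihx => exact ihx.inv_left

/-- left multiplication of entry `i` by a power of another entry, as Nielsen moves -/
lemma ne_update_left_single (T : Fin n → G) (i j : Fin n) (hij : i ≠ j) (ε : ℤ)
    (hε : ε = 1 ∨ ε = -1) : NielsenEq G n T (update T i (T j ^ ε * T i)) := by
  have h1 : NielsenEq G n T (update T i (T i)⁻¹) := ne_of_move (.inv T i)
  set T1 := update T i (T i)⁻¹ with hT1
  have h2 : NielsenEq G n T1 (update T1 i (T1 i * T1 j ^ (-ε))) :=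
    ne_of_move (.mul T1 i j hij (-ε) (by omega))
  have e2 : update T1 i (T1 i * T1 j ^ (-ε)) = update T i ((T i)⁻¹ * T j ^ (-ε)) := by
    simp [hT1, update_idem, update_of_ne (Ne.symm hij)]
  rw [e2] at h2
  set T2 := update T i ((T i)⁻¹ * T j ^ (-ε)) with hT2
  have h3 : NielsenEq G n T2 (update T2 i (T2 i)⁻¹) := ne_of_move (.inv T2 i)
  have e3 : update T2 i (T2 i)⁻¹ = update T i (T j ^ ε * T i) := by
    simp [hT2, update_idem, mul_inv_rev, zpow_neg]
  rw [e3] at h3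
  exact ne_trans (ne_trans h1 h2) h3

lemma ne_update_left_mem (T : Fin n → G) (i : Fin n) {w : G} (hw : w ∈ otherSub T i) :
    ∀ x : G, NielsenEq G n (update T i x) (update T i (w * x)) := by
  induction hw using Subgroup.closure_induction with
  | mem u hu =>
    intro x
    obtain ⟨j, hji, rfl⟩ := hu
    have := ne_update_left_single (update T i x) i j (Ne.symm hji) 1 (Or.inl rfl)
    simpa [update_idem, update_of_ne hji] using this
  | one => intro x; simp only [one_mul]; exact ne_refl _
  | mul u v hu hv ihu ihv =>
    intro x
    have h1 := ihv x
    have h2 := ihu (v * x)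
    rw [← mul_assoc] at h2
    exact ne_trans h1 h2
  | inv u hu ihu =>
    intro x
    have := ihu (u⁻¹ * x)
    rw [← mul_assoc, mul_inv_cancel, one_mul] at this
    exact ne_symm this

lemma ne_update_right_mem (T : Fin n → G) (i : Fin n) {w : G} (hw : w ∈ otherSub T i) :
    ∀ x : G, NielsenEq G n (update T i x) (update T i (x * w)) := by
  induction hw using Subgroup.closure_induction with
  | mem u hu =>
    intro x
    obtain ⟨j, hji, rfl⟩ := hu
    have : NielsenEq G n (update T i x)
        (update (update T i x) i ((update T i x) i * (update T i x) j ^ (1 : ℤ))) :=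
      ne_of_move (.mul (update T i x) i j (Ne.symm hji) 1 (Or.inl rfl))
    simpa [update_idem, update_of_ne hji] using this
  | one => intro x; simp only [mul_one]; exact ne_refl _
  | mul u v hu hv ihu ihv =>
    intro x
    have h1 := ihu x
    have h2 := ihv (x * u)
    rw [mul_assoc] at h2
    exact ne_trans h1 h2
  | inv u hu ihu =>
    intro x
    have := ihu (x * u⁻¹)
    rw [mul_assoc, inv_mul_cancel, mul_one] at this
    exact ne_symm this

end Aux

section SurfaceGroup

variable {G : Type*} [Group G]

open Function

open scoped commutatorElement

/-- split the surface relator at the `k`-th commutator -/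
lemma surfaceRel_split {g : ℕ} (T : Fin (2 * g) → G) (i : Fin (2 * g)) (k : ℕ) (hkg : k < g)
    (hik : i.val = 2 * k ∨ i.val = 2 * k + 1) :
    ∃ L R : G, L ∈ otherSub T i ∧ R ∈ otherSub T i ∧
      surfaceRel g T =
        L * ⁅T ⟨2 * k, by omega⟩, T ⟨2 * k + 1, by omega⟩⁆ * R := by
  classical
  set F : Fin g → G := fun j =>
    ⁅T ⟨2 * j.val, by have := j.isLt; omega⟩, T ⟨2 * j.val + 1, by have := j.isLt; omega⟩⁆ with hF
  set kf : Fin g := ⟨k, hkg⟩ with hkf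
  have hlen : k < (List.finRange g).length := by simpa using hkg
  have hdecomp : List.finRange g =
      (List.finRange g).take k ++ kf :: (List.finRange g).drop (k + 1) := by
    conv_lhs => rw [← List.take_append_drop k (List.finRange g)]
    congr 1
    rw [List.drop_eq_getElem_cons hlen]
    congr 1
    simp [List.getElem_finRange, hkf, Fin.ext_iff]
  have hnodup : (List.finRange g).Nodup := List.nodup_finRange g
  rw [hdecomp] at hnodup
  have hknt : kf ∉ (List.finRange g).take k := by
    intro hmem
    exact (List.nodup_append'.mp hnodup).2.2 hmem List.mem_cons_self
  have hknd : kf ∉ (List.finRange g).drop (k + 1) := by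
    have := (List.nodup_append.mp hnodup).2.1
    exact (List.nodup_cons.mp this).1
  -- membership of each factor
  have hfac : ∀ j : Fin g, j ≠ kf → F j ∈ otherSub T i := by
    intro j hj
    have hjv : j.val ≠ k := by
      intro h; exact hj (by ext; simpa using h)
    have h1 : (⟨2 * j.val, by have := j.isLt; omega⟩ : Fin (2 * g)) ≠ i := by
      intro h; apply hjv
      have := congrArg Fin.val h
      simp at this; omega
    have h2 : (⟨2 * j.val + 1, by have := j.isLt; omega⟩ : Fin (2 * g)) ≠ i := by
      intro h; apply hjv
      have := congrArg Fin.val h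
      simp at this; omega
    show ⁅T ⟨2 * j.val, by have := j.isLt; omega⟩, T ⟨2 * j.val + 1, by have := j.isLt; omega⟩⁆
      ∈ otherSub T i
    rw [commutatorElement_def]
    exact mul_mem (mul_mem (mul_mem (mem_otherSub h1) (mem_otherSub h2))
      (inv_mem (mem_otherSub h1))) (inv_mem (mem_otherSub h2))
  refine ⟨(((List.finRange g).take k).map F).prod, (((List.finRange g).drop (k + 1)).map F).prod,
    ?_, ?_, ?_⟩
  · apply Subgroup.list_prod_mem
    intro x hx
    obtain ⟨j, hj, rfl⟩ := List.mem_map.mp hx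
    exact hfac j (fun h => hknt (h ▸ hj))
  · apply Subgroup.list_prod_mem
    intro x hx
    obtain ⟨j, hj, rfl⟩ := List.mem_map.mp hx
    exact hfac j (fun h => hknd (h ▸ hj))
  · show ((List.finRange g).map F).prod = _
    conv_lhs => rw [hdecomp]
    simp only [List.map_append, List.map_cons, List.prod_append, List.prod_cons]
    rw [← mul_assoc]

lemma comm_mul_fst {a b u : G} (h : Commute u b) : ⁅a * u, b⁆ = ⁅a, b⁆ := by
  simp only [commutatorElement_def, mul_inv_rev]
  have hb : u * b = b * u := h
  calc a * u * b * (u⁻¹ * a⁻¹) * b⁻¹ = a * (u * b) * u⁻¹ * a⁻¹ * b⁻¹ := by group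
    _ = a * (b * u) * u⁻¹ * a⁻¹ * b⁻¹ := by rw [hb]
    _ = a * b * a⁻¹ * b⁻¹ := by group

lemma comm_mul_snd {a b u : G} (h : Commute u a) : ⁅a, b * u⁆ = ⁅a, b⁆ := by
  simp only [commutatorElement_def, mul_inv_rev]
  have ha : u * a⁻¹ = a⁻¹ * u := h.inv_right
  calc a * (b * u) * a⁻¹ * (u⁻¹ * b⁻¹) = a * b * (u * a⁻¹) * u⁻¹ * b⁻¹ := by group
    _ = a * b * (a⁻¹ * u) * u⁻¹ * b⁻¹ := by rw [ha]
    _ = a * b * a⁻¹ * b⁻¹ := by group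

lemma comm_mul_both {a b f : G} (ha : Commute a f) (hb : Commute b f) (p q : ℤ) :
    ⁅a * f ^ p, b * f ^ q⁆ = ⁅a, b⁆ := by
  rw [comm_mul_snd (((ha.zpow_right q).symm).mul_right ((Commute.refl f).zpow_zpow q p)),
    comm_mul_fst ((hb.zpow_right p).symm)]

lemma surfaceRel_mul_zpow {g : ℕ} (a : Fin (2 * g) → G) (f : G)
    (hc : ∀ i, Commute (a i) f) (z : Fin (2 * g) → ℤ) :
    surfaceRel g (fun j => a j * f ^ z j) = surfaceRel g a := by
  unfold surfaceRel
  congr 1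
  apply List.map_congr_left
  intro j _
  exact comm_mul_both (hc _) (hc _) _ _

lemma surfaceRel_update {g : ℕ} (T : Fin (2 * g) → G) (F : G) (hc : ∀ j, Commute F (T j))
    (i : Fin (2 * g)) (u : G) (hu : ∀ t : G, Commute F t → Commute u t) :
    surfaceRel g (Function.update T i (T i * u)) = surfaceRel g T := by
  classical
  unfold surfaceRel
  congr 1
  apply List.map_congr_left
  intro j _
  set v1 : Fin (2 * g) := ⟨2 * j.val, by have := j.isLt; omega⟩ with hv1
  set v2 : Fin (2 * g) := ⟨2 * j.val + 1, by have := j.isLt; omega⟩ with hv2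
  have hne : v1 ≠ v2 := by simp [hv1, hv2, Fin.ext_iff]
  by_cases h1 : v1 = i
  · have h2 : v2 ≠ i := h1 ▸ hne.symm
    rw [h1, Function.update_self, Function.update_of_ne h2, ← h1]
    exact comm_mul_fst (hu _ (hc v2))
  · rw [Function.update_of_ne h1]
    by_cases h2 : v2 = i
    · rw [h2, Function.update_self, ← h2]
      exact comm_mul_snd (hu _ (hc v1))
    · rw [Function.update_of_ne h2]

/-- the key step: entry `i` even slot, multiply by `F⁻¹`. -/
lemma ne_main_even {g : ℕ} (T : Fin (2 * g) → G) (F : G) (hc : ∀ j, Commute (T j) F)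
    (hr : surfaceRel g T = F) (i : Fin (2 * g)) (k : ℕ) (hik : i.val = 2 * k) :
    NielsenEq G (2 * g) T (Function.update T i (T i * F⁻¹)) := by
  classical
  have hkg : k < g := by have := i.isLt; omega
  obtain ⟨L, R, hL, hR, hsplit⟩ := surfaceRel_split T i k hkg (Or.inl hik)
  set p : Fin (2 * g) := ⟨2 * k + 1, by omega⟩ with hp
  have hip : (⟨2 * k, by omega⟩ : Fin (2 * g)) = i := by simp [Fin.ext_iff, hik]
  have hpi : p ≠ i := by simp [hp, Fin.ext_iff, hik]
  rw [hip] at hsplit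
  set x := T i with hx
  set y := T p with hy
  rw [hr] at hsplit
  -- Nielsen chain
  have s1 : NielsenEq G (2 * g) T (Function.update T i (y * x)) := by
    have := ne_update_left_mem T i (mem_otherSub hpi) (T i)
    rwa [Function.update_eq_self] at this
  have s2 : NielsenEq G (2 * g) (Function.update T i (y * x))
      (Function.update T i (y * x * y⁻¹)) :=
    ne_update_right_mem T i (inv_mem (mem_otherSub hpi)) (y * x)
  have s3 : NielsenEq G (2 * g) (Function.update T i (y * x * y⁻¹))
      (Function.update T i (L⁻¹ * R⁻¹ * (y * x * y⁻¹))) :=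
    ne_update_left_mem T i (mul_mem (inv_mem hL) (inv_mem hR)) _
  have hLF : Commute L F := commute_otherSub hc hL
  have hxF : Commute x F := hc i
  -- the group identity
  have h1 : F = x * y * x⁻¹ * y⁻¹ * (R * L) := by
    have hcomm : L * F = F * L := hLF
    rw [hsplit, commutatorElement_def] at hcomm
    rw [hsplit, commutatorElement_def]
    apply mul_left_cancel (a := L)
    calc L * (L * (x * y * x⁻¹ * y⁻¹) * R) = L * (x * y * x⁻¹ * y⁻¹) * R * L := hcomm
      _ = L * (x * y * x⁻¹ * y⁻¹ * (R * L)) := by group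
  have key : L⁻¹ * R⁻¹ * (y * x * y⁻¹) = x * F⁻¹ := by
    have : x * F⁻¹ = F⁻¹ * x := hxF.inv_right.eq
    rw [this, h1]
    group
  rw [key] at s3
  exact ne_trans (ne_trans s1 s2) s3

/-- the key step: entry `i` odd slot, multiply by `F`. -/
lemma ne_main_odd {g : ℕ} (T : Fin (2 * g) → G) (F : G) (hc : ∀ j, Commute (T j) F)
    (hr : surfaceRel g T = F) (i : Fin (2 * g)) (k : ℕ) (hik : i.val = 2 * k + 1) :
    NielsenEq G (2 * g) T (Function.update T i (T i * F)) := by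
  classical
  have hkg : k < g := by have := i.isLt; omega
  obtain ⟨L, R, hL, hR, hsplit⟩ := surfaceRel_split T i k hkg (Or.inr hik)
  set p : Fin (2 * g) := ⟨2 * k, by omega⟩ with hp
  have hip : (⟨2 * k + 1, by omega⟩ : Fin (2 * g)) = i := by simp [Fin.ext_iff, hik]
  have hpi : p ≠ i := by simp [hp, Fin.ext_iff, hik]
  rw [hip] at hsplit
  set y := T i with hy
  set x := T p with hx
  rw [hr] at hsplit
  have s1 : NielsenEq G (2 * g) T (Function.update T i (x * y)) := by
    have := ne_update_left_mem T i (mem_otherSub hpi) (T i)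
    rwa [Function.update_eq_self] at this
  have s2 : NielsenEq G (2 * g) (Function.update T i (x * y))
      (Function.update T i (x * y * x⁻¹)) :=
    ne_update_right_mem T i (inv_mem (mem_otherSub hpi)) (x * y)
  have s3 : NielsenEq G (2 * g) (Function.update T i (x * y * x⁻¹))
      (Function.update T i (R * L * (x * y * x⁻¹))) :=
    ne_update_left_mem T i (mul_mem hR hL) _
  have hRF : Commute R F := commute_otherSub hc hR
  have hyF : Commute y F := hc i
  have h1 : F = R * L * (x * y * x⁻¹ * y⁻¹) := by
    have hcomm : R * F = F * R := hRF
    rw [hsplit, commutatorElement_def] at hcomm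
    rw [hsplit, commutatorElement_def]
    apply mul_right_cancel (b := R)
    calc L * (x * y * x⁻¹ * y⁻¹) * R * R = R * (L * (x * y * x⁻¹ * y⁻¹) * R) := hcomm.symm
      _ = R * L * (x * y * x⁻¹ * y⁻¹) * R := by group
  have key : R * L * (x * y * x⁻¹) = y * F := by
    have : y * F = F * y := hyF
    rw [this, h1]
    group
  rw [key] at s3
  exact ne_trans (ne_trans s1 s2) s3

/-- multiply entry `i` by `F ^ δ` for `δ = ±1`. -/
lemma ne_main {g : ℕ} (T : Fin (2 * g) → G) (F : G) (hc : ∀ j, Commute (T j) F)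
    (hr : surfaceRel g T = F) (i : Fin (2 * g)) (δ : ℤ) (hδ : δ = 1 ∨ δ = -1) :
    NielsenEq G (2 * g) T (Function.update T i (T i * F ^ δ)) := by
  classical
  -- reverse direction helper
  have reverse : ∀ (u : G), (∀ t : G, Commute F t → Commute u t) →
      surfaceRel g (Function.update T i (T i * u)) = F →
      NielsenEq G (2 * g) (Function.update T i (T i * u))
        (Function.update T i (T i * u * u⁻¹)) →
      NielsenEq G (2 * g) T (Function.update T i (T i * u)) := by
    intro u _ _ hne
    have e : Function.update (Function.update T i (T i * u)) i (T i * u * u⁻¹) = T := by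
      rw [Function.update_idem, mul_assoc, mul_inv_cancel, mul_one, Function.update_eq_self]
    rw [show Function.update T i (T i * u * u⁻¹) =
      Function.update (Function.update T i (T i * u)) i (T i * u * u⁻¹) by
        rw [Function.update_idem]] at hne
    rw [e] at hne
    exact ne_symm hne
  have hcF : ∀ j, Commute F (T j) := fun j => (hc j).symm
  rcases Nat.even_or_odd i.val with ⟨k, hk⟩ | ⟨k, hk⟩
  · have hik : i.val = 2 * k := by omega
    rcases hδ with rfl | rfl
    · -- even slot, δ = 1 : reverse of the even move applied to T'
      set T' := Function.update T i (T i * F ^ (1 : ℤ)) with hT'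
      have hsr : surfaceRel g T' = F := by
        rw [hT', zpow_one]
        rw [surfaceRel_update T F hcF i F (fun t ht => ht)]
        exact hr
      have hc' : ∀ j, Commute (T' j) F := by
        intro j
        rcases eq_or_ne j i with rfl | hji
        · rw [hT', Function.update_self]
          exact (hc j).mul_left ((Commute.refl F).zpow_left _)
        · rw [hT', Function.update_of_ne hji]; exact hc j
      have := ne_main_even T' F hc' hsr i k hik
      have hT'i : T' i = T i * F ^ (1 : ℤ) := by rw [hT', Function.update_self]
      rw [hT'i] at this
      rw [show Function.update T' i (T i * F ^ (1 : ℤ) * F⁻¹) =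
          Function.update T i (T i * F ^ (1 : ℤ) * F⁻¹) by rw [hT', Function.update_idem]] at this
      rw [show T i * F ^ (1 : ℤ) * F⁻¹ = T i by rw [zpow_one, mul_assoc, mul_inv_cancel, mul_one],
        Function.update_eq_self] at this
      exact ne_symm this
    · have := ne_main_even T F hc hr i k hik
      rwa [show F ^ (-1 : ℤ) = F⁻¹ by rw [zpow_neg, zpow_one]]
  · have hik : i.val = 2 * k + 1 := by omega
    rcases hδ with rfl | rfl
    · have := ne_main_odd T F hc hr i k hik
      rwa [show F ^ (1 : ℤ) = F by rw [zpow_one]]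
    · -- odd slot, δ = -1 : reverse of the odd move
      set T' := Function.update T i (T i * F ^ (-1 : ℤ)) with hT'
      have hsr : surfaceRel g T' = F := by
        rw [hT', show F ^ (-1 : ℤ) = F⁻¹ by rw [zpow_neg, zpow_one]]
        rw [surfaceRel_update T F hcF i F⁻¹ (fun t ht => ht.inv_left)]
        exact hr
      have hc' : ∀ j, Commute (T' j) F := by
        intro j
        rcases eq_or_ne j i with rfl | hji
        · rw [hT', Function.update_self]
          exact (hc j).mul_left ((Commute.refl F).zpow_left _)
        · rw [hT', Function.update_of_ne hji]; exact hc j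
      have := ne_main_odd T' F hc' hsr i k hik
      have hT'i : T' i = T i * F ^ (-1 : ℤ) := by rw [hT', Function.update_self]
      rw [hT'i] at this
      rw [show Function.update T' i (T i * F ^ (-1 : ℤ) * F) =
          Function.update T i (T i * F ^ (-1 : ℤ) * F) by rw [hT', Function.update_idem]] at this
      rw [show T i * F ^ (-1 : ℤ) * F = T i by
          rw [zpow_neg, zpow_one, mul_assoc, inv_mul_cancel, mul_one],
        Function.update_eq_self] at this
      exact ne_symm this

end SurfaceGroup

/-- In the fundamental group of a circle bundle with Euler number `e = ±1`, the tuple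
`(a₁ f^{z₁}, …, a_{2g} f^{z_{2g}})` is Nielsen equivalent to the tuple obtained by
replacing `aᵢ f^{zᵢ}` with `aᵢ f^{zᵢ+η}`, all other entries unchanged. -/
theorem nielsenEq_update_fiber_power {G : Type*} [Group G] (g : ℕ) (hg : 1 ≤ g)
    (e : ℤ) (he : e = 1 ∨ e = -1) (a : Fin (2 * g) → G) (f : G)
    (hcomm : ∀ i, Commute (a i) f)
    (hrel : surfaceRel g a * f ^ e = 1)
    (z : Fin (2 * g) → ℤ) (i : Fin (2 * g)) (η : ℤ) (hη : η = 1 ∨ η = -1) :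
    NielsenEq G (2 * g) (fun j => a j * f ^ z j)
      (Function.update (fun j => a j * f ^ z j) i (a i * f ^ (z i + η))) := by
  set T : Fin (2 * g) → G := fun j => a j * f ^ z j with hT
  set F : G := f ^ (-e) with hF
  have hcT : ∀ j, Commute (T j) F := fun j =>
    ((hcomm j).mul_left ((Commute.refl f).zpow_left _)).zpow_right _
  have hrT : surfaceRel g T = F := by
    rw [hT, surfaceRel_mul_zpow a f hcomm z, hF, zpow_neg]
    exact eq_inv_of_mul_eq_one_left hrel
  have hδ : -(e * η) = 1 ∨ -(e * η) = -1 := by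
    rcases he with rfl | rfl <;> rcases hη with rfl | rfl <;> norm_num
  have main := ne_main T F hcT hrT i (-(e * η)) hδ
  have hFδ : F ^ (-(e * η)) = f ^ η := by
    rw [hF, ← zpow_mul]
    congr 1
    rcases he with rfl | rfl <;> ring
  have hval : T i * F ^ (-(e * η)) = a i * f ^ (z i + η) := by
    rw [hFδ, hT, zpow_add, mul_assoc]
  rw [hval] at main
  exact main
end

section
/- Let G = ⟨a1,...,a_{2g}, f | f central, [a1,a2]···[a_{2g−1},a_{2g}] = f^{−e}⟩. If a generating 2g-tuple (y1,...,y_{2g}) of G projects under p : G → π1(S_g) to a tuple Nielsen equivalent to (ā1,...,ā_{2g}), then (y1,...,y_{2g}) is Nielsen equivalent in G to a tuple of the form (a1 f^{z1},...,a_{2g} f^{z_{2g}}) for some integers z1,...,z_{2g}. -/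
namespace NielsenMove

variable {G Q : Type*} [Group G] [Group Q] {n : ℕ}

theorem symm {s t : Fin n → G} (h : NielsenMove G n s t) : NielsenMove G n t s := by
  cases h with
  | perm σ =>
    have undo : (s ∘ σ) ∘ ⇑σ⁻¹ = s := by ext; simp
    simpa only [undo] using perm (s ∘ σ) σ⁻¹
  | inv i =>
    have undo : Function.update (Function.update s i (s i)⁻¹) i
        ((Function.update s i (s i)⁻¹) i)⁻¹ = s := by simp
    simpa only [undo] using inv (Function.update s i (s i)⁻¹) i
  | mul i j hij ε hε =>
    have undo : Function.update (Function.update s i (s i * s j ^ ε)) i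
        ((Function.update s i (s i * s j ^ ε)) i *
          (Function.update s i (s i * s j ^ ε)) j ^ (-ε)) = s := by
      simp [Function.update_of_ne hij.symm, mul_assoc]
    simpa only [undo] using mul (Function.update s i (s i * s j ^ ε)) i j hij (-ε) (by omega)

instance : Std.Symm (NielsenMove G n) := ⟨fun _ _ => symm⟩

theorem exists_lift (p : G →* Q) {T : Fin n → G} {t : Fin n → Q}
    (h : NielsenMove Q n (p ∘ T) t) : ∃ T', NielsenMove G n T T' ∧ p ∘ T' = t := by
  cases h with
  | perm σ => exact ⟨T ∘ σ, perm T σ, rfl⟩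
  | inv i => exact ⟨_, inv T i, by simp [Function.comp_update]⟩
  | mul i j hij ε hε => exact ⟨_, mul T i j hij ε hε, by simp [Function.comp_update]⟩

end NielsenMove

theorem nielsenEq_iff_reflTransGen {G : Type*} [Group G] {n : ℕ} {s t : Fin n → G} :
    NielsenEq G n s t ↔ Relation.ReflTransGen (NielsenMove G n) s t := by
  rw [NielsenEq, Relation.EqvGen.eqvGen_eq_reflTransGen]

theorem NielsenEq.exists_lift {G Q : Type*} [Group G] [Group Q] {n : ℕ} (p : G →* Q)
    {T : Fin n → G} {t : Fin n → Q} (h : NielsenEq Q n (p ∘ T) t) :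
    ∃ T', NielsenEq G n T T' ∧ p ∘ T' = t := by
  rw [nielsenEq_iff_reflTransGen] at h
  induction h with
  | refl => exact ⟨T, .refl T, rfl⟩
  | tail _ hmove ih =>
    obtain ⟨T₁, hT₁, rfl⟩ := ih
    obtain ⟨T₂, hT₂, rfl⟩ := hmove.exists_lift p
    exact ⟨T₂, .trans _ _ _ hT₁ (.rel _ _ hT₂), rfl⟩

theorem MonoidHom.exists_eq_mul_zpow_of_comp_eq {G Q ι : Type*} [Group G] [Group Q]
    {p : G →* Q} {f : G} (hker : p.ker = Subgroup.zpowers f) {a b : ι → G}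
    (h : p ∘ b = p ∘ a) : ∃ z : ι → ℤ, b = fun i => a i * f ^ z i := by
  have hfiber (i : ι) : ∃ z : ℤ, f ^ z = (a i)⁻¹ * b i := by
    rw [← Subgroup.mem_zpowers_iff, ← hker, p.mem_ker, map_mul, map_inv,
      inv_mul_eq_one]
    exact (congrFun h i).symm
  choose z hz using hfiber
  exact ⟨z, funext fun i => by rw [hz, mul_inv_cancel_left]⟩

theorem nielsenEq_lift_to_fiber_powers_general {G Q : Type*} [Group G] [Group Q] (n : ℕ)
    (p : G →* Q) (f : G)
    (hker : p.ker = Subgroup.zpowers f)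
    (a y : Fin n → G)
    (h : NielsenEq Q n (fun i => p (y i)) (fun i => p (a i))) :
    ∃ z : Fin n → ℤ, NielsenEq G n y (fun i => a i * f ^ z i) := by
  obtain ⟨y', hyy', hy'⟩ := NielsenEq.exists_lift p h
  obtain ⟨z, rfl⟩ := p.exists_eq_mul_zpow_of_comp_eq hker hy'
  exact ⟨z, hyy'⟩

/-- If `p : G → Q` kills exactly the central cyclic subgroup `⟨f⟩`, and a generating
tuple `y` of `G` projects to a tuple Nielsen equivalent to the projection of `a`,
then `y` is Nielsen equivalent to `(a₁ f^{z₁}, …, aₙ f^{zₙ})` for some integers `zᵢ`. -/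
theorem nielsenEq_lift_to_fiber_powers {G Q : Type*} [Group G] [Group Q] (n : ℕ)
    (p : G →* Q) (hsurj : Function.Surjective p) (f : G)
    (hf : f ∈ Subgroup.center G) (hker : p.ker = Subgroup.zpowers f)
    (a y : Fin n → G)
    (hgen : Subgroup.closure (Set.range y) = ⊤)
    (h : NielsenEq Q n (fun i => p (y i)) (fun i => p (a i))) :
    ∃ z : Fin n → ℤ, NielsenEq G n y (fun i => a i * f ^ z i) :=
  nielsenEq_lift_to_fiber_powers_general n p f hker a y h
end

section
/- Let p : G → Q be a surjective group homomorphism whose kernel is central and generated by a single element f. If two n-tuples in G have Nielsen equivalent images in Q, then the tuples in G are Nielsen equivalent to tuples that differ entrywise only by powers of f: i.e., if (p(x1),...,p(xn)) is Nielsen equivalent to (p(y1),...,p(yn)), then (x1,...,xn) is Nielsen equivalent to (y1 f^{m1},...,yn f^{mn}) for some integers m1,...,mn. -/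
section Aux
variable {G : Type*} [Group G] {n : ℕ} {f : G}

lemma fcomm (hf : f ∈ Subgroup.center G) (g : G) (k : ℤ) : g * f ^ k = f ^ k * g :=
  Subgroup.mem_center_iff.mp (Subgroup.zpow_mem (Subgroup.center G) hf k) g

lemma key_inv (hf : f ∈ Subgroup.center G) (a : G) (s : ℤ) :
    (a * f ^ s)⁻¹ = a⁻¹ * f ^ (-s) := by
  rw [mul_inv_rev, ← zpow_neg, fcomm hf]

lemma key_mul (hf : f ∈ Subgroup.center G) (a b : G) (s t ε : ℤ) (hε : ε = 1 ∨ ε = -1) :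
    a * f ^ s * (b * f ^ t) ^ ε = a * b ^ ε * f ^ (s + ε * t) := by
  have h1 : (b * f ^ t) ^ ε = b ^ ε * f ^ (ε * t) := by
    rcases hε with rfl | rfl
    · simp
    · rw [zpow_neg_one, key_inv hf, zpow_neg_one, neg_one_mul, zpow_neg]
  rw [h1, mul_assoc, ← mul_assoc (f ^ s), ← fcomm hf (b ^ ε) s]
  simp [mul_assoc, ← zpow_add]

lemma move_corr_fwd (hf : f ∈ Subgroup.center G) {T T' : Fin n → G}
    (h : NielsenMove G n T T') (m : Fin n → ℤ) :
    ∃ m' : Fin n → ℤ, NielsenMove G n (fun i => T i * f ^ m i) (fun i => T' i * f ^ m' i) := by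
  cases h with
  | perm σ =>
      exact ⟨m ∘ σ, NielsenMove.perm (fun i => T i * f ^ m i) σ⟩
  | inv i =>
      refine ⟨Function.update m i (-(m i)), ?_⟩
      have := NielsenMove.inv (fun k => T k * f ^ m k) i
      convert this using 1
      funext k
      rcases eq_or_ne k i with rfl | hk
      · simp [key_inv hf]
      · simp [Function.update_of_ne hk]
  | mul i j hij ε hε =>
      refine ⟨Function.update m i (m i + ε * m j), ?_⟩
      have := NielsenMove.mul (fun k => T k * f ^ m k) i j hij ε hε
      convert this using 1
      funext k
      rcases eq_or_ne k i with rfl | hk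
      · simp [Function.update_of_ne (Ne.symm hij), key_mul hf _ _ _ _ _ hε]
      · simp [Function.update_of_ne hk]

lemma move_corr_bwd (hf : f ∈ Subgroup.center G) {T T' : Fin n → G}
    (h : NielsenMove G n T T') (m' : Fin n → ℤ) :
    ∃ m : Fin n → ℤ, NielsenMove G n (fun i => T i * f ^ m i) (fun i => T' i * f ^ m' i) := by
  cases h with
  | perm σ =>
      refine ⟨m' ∘ σ.symm, ?_⟩
      have := NielsenMove.perm (fun i => T i * f ^ (m' (σ.symm i))) σ
      convert this using 1
      funext k
      simp
      funext k
      simp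
  | inv i =>
      refine ⟨Function.update m' i (-(m' i)), ?_⟩
      have := NielsenMove.inv (fun k => T k * f ^ (Function.update m' i (-(m' i)) k)) i
      convert this using 1
      funext k
      rcases eq_or_ne k i with rfl | hk
      · simp [key_inv hf, fcomm hf]
      · simp [Function.update_of_ne hk]
  | mul i j hij ε hε =>
      refine ⟨Function.update m' i (m' i - ε * m' j), ?_⟩
      have := NielsenMove.mul (fun k => T k * f ^ (Function.update m' i (m' i - ε * m' j) k)) i j hij ε hε
      convert this using 1
      funext k
      rcases eq_or_ne k i with rfl | hk
      · simp [Function.update_of_ne (Ne.symm hij), key_mul hf _ _ _ _ _ hε]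
      · simp [Function.update_of_ne hk]

lemma corr (hf : f ∈ Subgroup.center G) {a b : Fin n → G} (h : NielsenEq G n a b) :
    (∀ m : Fin n → ℤ, ∃ m' : Fin n → ℤ, NielsenEq G n (fun i => a i * f ^ m i) (fun i => b i * f ^ m' i)) ∧
    (∀ m' : Fin n → ℤ, ∃ m : Fin n → ℤ, NielsenEq G n (fun i => a i * f ^ m i) (fun i => b i * f ^ m' i)) := by
  induction h with
  | rel a b hm =>
      exact ⟨fun m => (move_corr_fwd hf hm m).imp fun m' h => Relation.EqvGen.rel _ _ h,
             fun m' => (move_corr_bwd hf hm m').imp fun m h => Relation.EqvGen.rel _ _ h⟩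
  | refl a => exact ⟨fun m => ⟨m, Relation.EqvGen.refl _⟩, fun m' => ⟨m', Relation.EqvGen.refl _⟩⟩
  | symm a b _ ih =>
      exact ⟨fun m => (ih.2 m).imp fun m' h => Relation.EqvGen.symm _ _ h,
             fun m' => (ih.1 m').imp fun m h => Relation.EqvGen.symm _ _ h⟩
  | trans a b c _ _ ih1 ih2 =>
      constructor
      · intro m
        obtain ⟨m1, h1⟩ := ih1.1 m
        obtain ⟨m2, h2⟩ := ih2.1 m1
        exact ⟨m2, Relation.EqvGen.trans _ _ _ h1 h2⟩
      · intro m'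
        obtain ⟨m1, h2⟩ := ih2.2 m'
        obtain ⟨m, h1⟩ := ih1.2 m1
        exact ⟨m, Relation.EqvGen.trans _ _ _ h1 h2⟩

end Aux

section Lift
variable {G Q : Type*} [Group G] [Group Q] {n : ℕ}

lemma lift_move (p : G →* Q) {A B : Fin n → Q} (h : NielsenMove Q n A B)
    (x : Fin n → G) (hx : ∀ i, p (x i) = A i) :
    ∃ x', NielsenMove G n x x' ∧ ∀ i, p (x' i) = B i := by
  cases h with
  | perm σ => exact ⟨x ∘ σ, NielsenMove.perm x σ, fun i => hx (σ i)⟩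
  | inv i =>
      refine ⟨Function.update x i (x i)⁻¹, NielsenMove.inv x i, fun k => ?_⟩
      rcases eq_or_ne k i with rfl | hk
      · simp [hx k]
      · simp [Function.update_of_ne hk, hx k]
  | mul i j hij ε hε =>
      refine ⟨Function.update x i (x i * x j ^ ε), NielsenMove.mul x i j hij ε hε, fun k => ?_⟩
      rcases eq_or_ne k i with rfl | hk
      · simp [hx k, hx j]
      · simp [Function.update_of_ne hk, hx k]

lemma diff_pow (p : G →* Q) {f : G} (hker : p.ker = Subgroup.zpowers f)
    {g h : G} (hgh : p g = p h) : ∃ k : ℤ, g = h * f ^ k := by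
  have : h⁻¹ * g ∈ p.ker := by
    simp [MonoidHom.mem_ker, hgh]
  rw [hker, Subgroup.mem_zpowers_iff] at this
  obtain ⟨k, hk⟩ := this
  exact ⟨k, by rw [hk]; group⟩

end Lift


/-- Lifting Nielsen equivalences along a central cyclic quotient: if
`p : G → Q` is surjective with kernel the central cyclic subgroup `⟨f⟩` and the
images of two `n`-tuples are Nielsen equivalent, then upstairs the tuples are
Nielsen equivalent after correcting entries by powers of `f`. -/
theorem nielsenEq_lift_central_kernel {G Q : Type*} [Group G] [Group Q] (n : ℕ)
    (p : G →* Q) (hsurj : Function.Surjective p) (f : G)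
    (hf : f ∈ Subgroup.center G) (hker : p.ker = Subgroup.zpowers f)
    (x y : Fin n → G)
    (h : NielsenEq Q n (fun i => p (x i)) (fun i => p (y i))) :
    ∃ m : Fin n → ℤ, NielsenEq G n x (fun i => y i * f ^ m i) := by
  suffices H : ∀ a b : Fin n → Q, Relation.EqvGen (NielsenMove Q n) a b →
      ∀ u v : Fin n → G, (∀ i, p (u i) = a i) → (∀ i, p (v i) = b i) →
      ∃ m : Fin n → ℤ, NielsenEq G n u (fun i => v i * f ^ m i) from
    H _ _ h x y (fun _ => rfl) (fun _ => rfl)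
  intro a b hab
  induction hab with
  | rel a b hm =>
      intro u v hu hv
      obtain ⟨u', hmove, hu'⟩ := lift_move p hm u hu
      have key : ∀ i, p (u' i) = p (v i) := fun i => by rw [hu' i, hv i]
      choose m hm' using fun i => diff_pow p hker (key i)
      refine ⟨m, ?_⟩
      have he : (fun i => v i * f ^ m i) = u' := funext fun i => (hm' i).symm
      rw [he]
      exact Relation.EqvGen.rel _ _ hmove
  | refl a =>
      intro u v hu hv
      have key : ∀ i, p (u i) = p (v i) := fun i => by rw [hu i, hv i]
      choose m hm' using fun i => diff_pow p hker (key i)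
      refine ⟨m, ?_⟩
      have he : (fun i => v i * f ^ m i) = u := funext fun i => (hm' i).symm
      rw [he]
      exact Relation.EqvGen.refl _
  | symm a b _ ih =>
      intro u v hu hv
      obtain ⟨m, hne⟩ := ih v u hv hu
      have hs : NielsenEq G n (fun i => u i * f ^ m i) v := Relation.EqvGen.symm _ _ hne
      obtain ⟨m', h'⟩ := (corr hf hs).1 (fun i => -(m i))
      refine ⟨m', ?_⟩
      have : (fun i => (u i * f ^ m i) * f ^ (-(m i))) = u := funext fun i => by group
      rwa [this] at h'
  | trans a b c _ _ ih1 ih2 =>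
      intro u v hu hv
      choose w hw using fun i => hsurj (b i)
      obtain ⟨m1, h1⟩ := ih1 u w hu hw
      obtain ⟨m2, h2⟩ := ih2 w v hw hv
      obtain ⟨m3, h3⟩ := (corr hf h2).1 m1
      refine ⟨fun i => m2 i + m3 i, Relation.EqvGen.trans _ _ _ h1 ?_⟩
      have : (fun i => (v i * f ^ m2 i) * f ^ m3 i) = fun i => v i * f ^ (m2 i + m3 i) :=
        funext fun i => by rw [zpow_add, mul_assoc]
      rwa [this] at h3
end

section
/- Let G be a group, f ∈ G central, and suppose w1 a w2 = a f^η holds in G for some elements a, w1, w2 and η ∈ {−1,1}, where w1 and w2 are products of elements b1,...,bk (each appearing with total exponent zero). Then for any integers z, z1,...,zk, the tuple (a f^z, b1 f^{z1}, ..., bk f^{zk}) is Nielsen equivalent to (a f^{z+η}, b1 f^{z1}, ..., bk f^{zk}). -/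
/-- The element of `G` represented by a word in the letters `b j` and their inverses. -/
def wordProd {G : Type*} [Group G] {k : ℕ} (b : Fin k → G) (w : List (Fin k × Bool)) : G :=
  (w.map (fun p => if p.2 then b p.1 else (b p.1)⁻¹)).prod

/-- The total exponent of the letter `j` in the word `w`. -/
def expSum {k : ℕ} (w : List (Fin k × Bool)) (j : Fin k) : ℤ :=
  (w.map (fun p => if p.1 = j then (if p.2 then (1 : ℤ) else -1) else 0)).sum

section Aux

variable {G : Type*} [Group G] {k : ℕ}

/-- One right multiplication of the 0-th entry by a letter. -/
lemma nielsenEq_step_right (b' : Fin k → G) (x : G) (p : Fin k × Bool) :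
    NielsenEq G (k + 1) (Fin.cons x b')
      (Fin.cons (x * (if p.2 then b' p.1 else (b' p.1)⁻¹)) b') := by
  have hne : (0 : Fin (k + 1)) ≠ p.1.succ := (Fin.succ_ne_zero p.1).symm
  have hm := NielsenMove.mul (Fin.cons x b') 0 p.1.succ hne (if p.2 then 1 else -1)
    (by cases p.2 <;> simp)
  have heq : Function.update (Fin.cons x b') 0
      ((Fin.cons x b' : Fin (k+1) → G) 0
        * (Fin.cons x b' : Fin (k+1) → G) p.1.succ ^ (if p.2 then (1 : ℤ) else -1))
      = (Fin.cons (x * (if p.2 then b' p.1 else (b' p.1)⁻¹)) b' : Fin (k+1) → G) := by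
    rw [Fin.update_cons_zero, Fin.cons_zero, Fin.cons_succ]
    cases p.2 <;> simp
  exact Relation.EqvGen.rel _ _ (heq ▸ hm)

/-- One left multiplication of the 0-th entry by a letter. -/
lemma nielsenEq_step_left (b' : Fin k → G) (x : G) (p : Fin k × Bool) :
    NielsenEq G (k + 1) (Fin.cons x b')
      (Fin.cons ((if p.2 then b' p.1 else (b' p.1)⁻¹) * x) b') := by
  have hne : (0 : Fin (k + 1)) ≠ p.1.succ := (Fin.succ_ne_zero p.1).symm
  -- invert
  have m1 := NielsenMove.inv (Fin.cons x b') 0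
  have h1 : Function.update (Fin.cons x b') 0 (Fin.cons x b' 0)⁻¹
      = (Fin.cons x⁻¹ b' : Fin (k+1) → G) := by
    rw [Fin.update_cons_zero, Fin.cons_zero]
  -- multiply by inverse letter
  have m2 := NielsenMove.mul (Fin.cons x⁻¹ b') 0 p.1.succ hne (if p.2 then -1 else 1)
    (by cases p.2 <;> simp)
  have h2 : Function.update (Fin.cons x⁻¹ b') 0
      ((Fin.cons x⁻¹ b' : Fin (k+1) → G) 0
        * (Fin.cons x⁻¹ b' : Fin (k+1) → G) p.1.succ ^ (if p.2 then (-1 : ℤ) else 1))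
      = (Fin.cons (x⁻¹ * (if p.2 then (b' p.1)⁻¹ else b' p.1)) b' : Fin (k+1) → G) := by
    rw [Fin.update_cons_zero, Fin.cons_zero, Fin.cons_succ]
    cases p.2 <;> simp
  -- invert back
  have m3 := NielsenMove.inv (Fin.cons (x⁻¹ * (if p.2 then (b' p.1)⁻¹ else b' p.1)) b') 0
  have h3 : Function.update (Fin.cons (x⁻¹ * (if p.2 then (b' p.1)⁻¹ else b' p.1)) b') 0
      (Fin.cons (x⁻¹ * (if p.2 then (b' p.1)⁻¹ else b' p.1)) b' 0)⁻¹
      = (Fin.cons ((if p.2 then b' p.1 else (b' p.1)⁻¹) * x) b' : Fin (k+1) → G) := by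
    rw [Fin.update_cons_zero, Fin.cons_zero]
    cases p.2 <;> simp [mul_inv_rev]
  exact Relation.EqvGen.trans _ _ _
    (Relation.EqvGen.trans _ _ _ (Relation.EqvGen.rel _ _ (h1 ▸ m1))
      (Relation.EqvGen.rel _ _ (h2 ▸ m2)))
    (Relation.EqvGen.rel _ _ (h3 ▸ m3))

lemma nielsenEq_word_right (b' : Fin k → G) (x : G) (w : List (Fin k × Bool)) :
    NielsenEq G (k + 1) (Fin.cons x b') (Fin.cons (x * wordProd b' w) b') := by
  induction w using List.reverseRecOn with
  | nil => simpa [wordProd, NielsenEq] using Relation.EqvGen.refl (r := NielsenMove G (k+1)) (Fin.cons x b')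
  | append_singleton w p ih =>
    have hw : wordProd b' (w ++ [p])
        = wordProd b' w * (if p.2 then b' p.1 else (b' p.1)⁻¹) := by
      simp [wordProd]
    rw [hw, ← mul_assoc]
    exact Relation.EqvGen.trans _ _ _ ih (nielsenEq_step_right b' (x * wordProd b' w) p)

lemma nielsenEq_word_left (b' : Fin k → G) (x : G) (w : List (Fin k × Bool)) :
    NielsenEq G (k + 1) (Fin.cons x b') (Fin.cons (wordProd b' w * x) b') := by
  induction w with
  | nil => simpa [wordProd, NielsenEq] using Relation.EqvGen.refl (r := NielsenMove G (k+1)) (Fin.cons x b')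
  | cons p w ih =>
    have hw : wordProd b' (p :: w)
        = (if p.2 then b' p.1 else (b' p.1)⁻¹) * wordProd b' w := by
      simp [wordProd]
    rw [hw, mul_assoc]
    exact Relation.EqvGen.trans _ _ _ ih (nielsenEq_step_left b' (wordProd b' w * x) p)

lemma wordProd_central (b : Fin k → G) (f : G) (hf : ∀ g : G, f * g = g * f)
    (zs : Fin k → ℤ) (w : List (Fin k × Bool)) :
    wordProd (fun j => b j * f ^ zs j) w
      = wordProd b w * f ^ ((w.map (fun p => if p.2 then zs p.1 else -zs p.1)).sum) := by
  have hc : ∀ (m : ℤ) (g : G), f ^ m * g = g * f ^ m := fun m g =>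
    ((show Commute f g from hf g).zpow_left m).eq
  have hmul : ∀ (x y : G) (m n : ℤ), (x * f ^ m) * (y * f ^ n) = (x * y) * f ^ (m + n) := by
    intro x y m n
    rw [zpow_add, mul_assoc x, ← mul_assoc (f ^ m), hc m y, mul_assoc, mul_assoc]
  induction w with
  | nil => simp [wordProd]
  | cons p w ih =>
    have hlet : (if p.2 then b p.1 * f ^ zs p.1 else (b p.1 * f ^ zs p.1)⁻¹)
        = (if p.2 then b p.1 else (b p.1)⁻¹) * f ^ (if p.2 then zs p.1 else -zs p.1) := by
      cases p.2 <;> simp [mul_inv_rev, ← hc]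
    have : wordProd (fun j => b j * f ^ zs j) (p :: w)
        = (if p.2 then b p.1 * f ^ zs p.1 else (b p.1 * f ^ zs p.1)⁻¹)
          * wordProd (fun j => b j * f ^ zs j) w := by simp [wordProd]
    have hcons : wordProd b (p :: w)
        = (if p.2 then b p.1 else (b p.1)⁻¹) * wordProd b w := by simp [wordProd]
    rw [this, ih, hlet, hmul, hcons, List.map_cons, List.sum_cons]

lemma fSum_eq (zs : Fin k → ℤ) (w : List (Fin k × Bool)) :
    (w.map (fun p => if p.2 then zs p.1 else -zs p.1)).sum
      = ∑ j, zs j * expSum w j := by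
  induction w with
  | nil => simp [expSum]
  | cons p w ih =>
    have hexp : ∀ j, expSum (p :: w) j
        = (if p.1 = j then (if p.2 then (1 : ℤ) else -1) else 0) + expSum w j := by
      intro j; simp [expSum]
    have hr : (∑ j, zs j * expSum (p :: w) j)
        = (∑ j, (if p.1 = j then zs j * (if p.2 then (1 : ℤ) else -1) else 0))
          + ∑ j, zs j * expSum w j := by
      rw [← Finset.sum_add_distrib]
      refine Finset.sum_congr rfl fun j _ => ?_
      rw [hexp j, mul_add]
      congr 1
      split <;> simp
    rw [List.map_cons, List.sum_cons, ih, hr, Finset.sum_ite_eq]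
    cases p.2 <;> simp

end Aux

/-- The key computational step: if `f` is central, `w₁ a w₂ = a f^η` where `w₁, w₂`
are words in letters `b₁, …, b_k` in which every letter has total exponent zero, then
`(a f^z, b₁ f^{z₁}, …, b_k f^{z_k})` is Nielsen equivalent to
`(a f^{z+η}, b₁ f^{z₁}, …, b_k f^{z_k})`. -/
theorem nielsenEq_fiber_shift {G : Type*} [Group G] (k : ℕ) (a f : G)
    (hf : f ∈ Subgroup.center G) (b : Fin k → G)
    (w₁ w₂ : List (Fin k × Bool)) (η : ℤ) (hη : η = 1 ∨ η = -1)
    (hexp : ∀ j, expSum (w₁ ++ w₂) j = 0)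
    (hrel : wordProd b w₁ * a * wordProd b w₂ = a * f ^ η)
    (z : ℤ) (zs : Fin k → ℤ) :
    NielsenEq G (k + 1) (Fin.cons (a * f ^ z) (fun j => b j * f ^ zs j))
      (Fin.cons (a * f ^ (z + η)) (fun j => b j * f ^ zs j)) := by
  have hfc : ∀ g : G, f * g = g * f := fun g => ((Subgroup.mem_center_iff.mp hf) g).symm
  have hc : ∀ (m : ℤ) (g : G), f ^ m * g = g * f ^ m := fun m g =>
    ((show Commute f g from hfc g).zpow_left m).eq
  set b' : Fin k → G := fun j => b j * f ^ zs j with hb'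
  set s₁ : ℤ := (w₁.map (fun p => if p.2 then zs p.1 else -zs p.1)).sum with hs₁
  set s₂ : ℤ := (w₂.map (fun p => if p.2 then zs p.1 else -zs p.1)).sum with hs₂
  have hsum : s₁ + s₂ = 0 := by
    have h0 : (((w₁ ++ w₂).map (fun p => if p.2 then zs p.1 else -zs p.1)).sum : ℤ) = 0 := by
      rw [fSum_eq]
      exact Finset.sum_eq_zero fun j _ => by rw [hexp j, mul_zero]
    rw [hs₁, hs₂, ← List.sum_append, ← List.map_append]
    exact h0
  have hW1 := wordProd_central b f hfc zs w₁
  have hW2 := wordProd_central b f hfc zs w₂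
  have hmul : ∀ (x y : G) (m n : ℤ), (x * f ^ m) * (y * f ^ n) = x * y * f ^ (m + n) := by
    intro x y m n
    rw [zpow_add, mul_assoc x, ← mul_assoc (f ^ m), hc m y, mul_assoc, mul_assoc]
  have key : wordProd b' w₁ * (a * f ^ z) * wordProd b' w₂ = a * f ^ (z + η) := by
    rw [hW1, hW2, ← hs₁, ← hs₂, hmul, hmul, hrel, mul_assoc, ← zpow_add]
    have hz : η + (s₁ + z + s₂) = z + η := by omega
    rw [hz]
  have e1 := nielsenEq_word_right b' (a * f ^ z) w₂
  have e2 := nielsenEq_word_left b' (a * f ^ z * wordProd b' w₂) w₁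
  have := Relation.EqvGen.trans _ _ _ e1 e2
  rw [show wordProd b' w₁ * (a * f ^ z * wordProd b' w₂)
      = wordProd b' w₁ * (a * f ^ z) * wordProd b' w₂ by group] at this
  rw [key] at this
  exact this
end
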